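/- For a² > 2, the function Φ(φ) = -sin φ - (a²/4) sin 2φ restricted to (π/2, 3π/2) has exactly two critical points, namely arccos(λ₂) and 2π - arccos(λ₂) with λ₂ = (-1 - √(1 + 2a⁴))/(2a²), and Φ is positive at the first and negative at the second. -/

import Mathlib

/-!
On `(π/2, 3π/2)` the derivative `-cos φ - (a²/2) cos 2φ` vanishes exactly when `t = cos φ` solves
`a² t² + t - a²/2 = 0`. Of its two roots `λ₁ > 0 > λ₂` only `λ₂` is available there, since `cos φ < 0`,
and `a² > 2` puts `λ₂` in `(-1, 0)`, so `cos φ = λ₂` has the two solutions `arccos λ₂` and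
`2π - arccos λ₂`. Finally `Φ(arccos t) = -√(1 - t²) (1 + a² t / 2)`, and `1 + a² λ₂ / 2 < 0` is again
equivalent to `a² > 2`; `Φ(2π - φ) = -Φ(φ)` gives the sign at the second point.
-/

open Real

theorem hasDerivAt_neg_sin_sub_mul_sin_two_mul (k x : ℝ) :
    HasDerivAt (fun φ => -sin φ - k * sin (2 * φ)) (-cos x - 2 * k * cos (2 * x)) x := by
  have h := ((hasDerivAt_sin x).neg).sub
    (((hasDerivAt_sin (2 * x)).comp x ((hasDerivAt_id x).const_mul 2)).const_mul k)
  exact h.congr_deriv (by simp only [mul_one]; ring)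

theorem neg_sin_sub_mul_sin_two_mul_two_pi_sub (k x : ℝ) :
    -sin (2 * π - x) - k * sin (2 * (2 * π - x)) = -(-sin x - k * sin (2 * x)) := by
  rw [sin_two_mul, sin_two_mul, sin_two_pi_sub, cos_two_pi_sub]
  ring

theorem neg_sin_sub_mul_sin_two_mul_arccos {t : ℝ} (ht : t ∈ Set.Icc (-1) 1) (k : ℝ) :
    -sin (arccos t) - k * sin (2 * arccos t) = -√(1 - t ^ 2) * (1 + 2 * k * t) := by
  rw [sin_two_mul, sin_arccos, cos_arccos ht.1 ht.2]
  ring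

theorem cos_eq_iff_eq_arccos_or_eq_two_pi_sub_arccos {φ t : ℝ} (hφ : φ ∈ Set.Icc 0 (2 * π))
    (ht : t ∈ Set.Icc (-1) 1) : cos φ = t ↔ φ = arccos t ∨ φ = 2 * π - arccos t := by
  constructor
  · rintro rfl
    rcases le_or_gt φ π with hle | hgt
    · exact .inl (arccos_cos hφ.1 hle).symm
    · right
      have := arccos_cos (x := 2 * π - φ) (by linarith [hφ.2]) (by linarith)
      rw [cos_two_pi_sub] at this
      linarith
  · rintro (rfl | rfl)
    · exact cos_arccos ht.1 ht.2
    · rw [cos_two_pi_sub, cos_arccos ht.1 ht.2]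

theorem neg_cos_sub_mul_cos_two_mul_eq_zero_iff {a : ℝ} (ha : a ≠ 0) (φ : ℝ) :
    -cos φ - a ^ 2 / 2 * cos (2 * φ) = 0 ↔
      cos φ = (-1 + √(1 + 2 * a ^ 4)) / (2 * a ^ 2) ∨
        cos φ = (-1 - √(1 + 2 * a ^ 4)) / (2 * a ^ 2) := by
  have hdiscrim : discrim (a ^ 2) 1 (-(a ^ 2 / 2)) = √(1 + 2 * a ^ 4) * √(1 + 2 * a ^ 4) := by
    rw [mul_self_sqrt (by positivity), discrim]
    ring
  rw [← quadratic_eq_zero_iff (pow_ne_zero 2 ha) hdiscrim, cos_two_mul, ← neg_eq_zero]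
  constructor <;> intro h <;> linear_combination h

section RootBounds

variable {a : ℝ}

theorem one_lt_sqrt_one_add_two_mul_pow_four (ha : a ≠ 0) : 1 < √(1 + 2 * a ^ 4) := by
  rw [lt_sqrt zero_le_one]
  have : 0 < a ^ 4 := by positivity
  linarith

theorem larger_critical_cos_pos (ha : a ≠ 0) : 0 < (-1 + √(1 + 2 * a ^ 4)) / (2 * a ^ 2) := by
  have := one_lt_sqrt_one_add_two_mul_pow_four ha
  have : 0 < a ^ 2 := by positivity
  apply div_pos <;> linarith

theorem smaller_critical_cos_mem_Ioo (ha : 2 < a ^ 2) :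
    (-1 - √(1 + 2 * a ^ 4)) / (2 * a ^ 2) ∈ Set.Ioo (-1) 0 := by
  have hs : √(1 + 2 * a ^ 4) < 2 * a ^ 2 - 1 := by
    rw [sqrt_lt' (by linarith)]
    nlinarith
  have := one_lt_sqrt_one_add_two_mul_pow_four (a := a) (by rintro rfl; norm_num at ha)
  constructor
  · rw [lt_div_iff₀ (by linarith)]
    linarith
  · apply div_neg_of_neg_of_pos <;> linarith

theorem one_add_mul_smaller_critical_cos_neg (ha : 2 < a ^ 2) :
    1 + a ^ 2 / 2 * ((-1 - √(1 + 2 * a ^ 4)) / (2 * a ^ 2)) < 0 := by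
  have hs : 3 < √(1 + 2 * a ^ 4) := by
    rw [lt_sqrt (by norm_num)]
    nlinarith
  have : a ≠ 0 := by rintro rfl; norm_num at ha
  rw [show a ^ 2 / 2 * ((-1 - √(1 + 2 * a ^ 4)) / (2 * a ^ 2)) = (-1 - √(1 + 2 * a ^ 4)) / 4 by
    field_simp; ring]
  linarith

end RootBounds

theorem exactly_two_critical_points (a : ℝ) (ha : 2 < a^2)
    (Φ : ℝ → ℝ) (hΦ : ∀ φ, Φ φ = -Real.sin φ - (a^2/4) * Real.sin (2*φ))
    (lam2 : ℝ) (h2 : lam2 = (-1 - Real.sqrt (1 + 2*a^4)) / (2*a^2)) :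
    (∀ φ ∈ Set.Ioo (π/2) (3*π/2),
      (deriv Φ φ = 0 ↔ φ = Real.arccos lam2 ∨ φ = 2*π - Real.arccos lam2)) ∧
    0 < Φ (Real.arccos lam2) ∧ Φ (2*π - Real.arccos lam2) < 0 := by
  obtain rfl : Φ = fun φ => -sin φ - a ^ 2 / 4 * sin (2 * φ) := funext hΦ
  have ha0 : a ≠ 0 := by rintro rfl; norm_num at ha
  have hlam := h2 ▸ smaller_critical_cos_mem_Ioo ha
  have hlam_key : 1 + a ^ 2 / 2 * lam2 < 0 := h2 ▸ one_add_mul_smaller_critical_cos_neg ha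
  have hlam_Icc : lam2 ∈ Set.Icc (-1) 1 := ⟨hlam.1.le, by linarith [hlam.2]⟩
  have hΦ_arccos : 0 < -sin (arccos lam2) - a ^ 2 / 4 * sin (2 * arccos lam2) := by
    rw [neg_sin_sub_mul_sin_two_mul_arccos hlam_Icc, neg_mul, neg_pos]
    refine mul_neg_of_pos_of_neg (sqrt_pos.2 (by nlinarith [hlam.1, hlam.2])) ?_
    linear_combination hlam_key
  refine ⟨fun φ hφ => ?_, hΦ_arccos, ?_⟩
  · have hcos : cos φ < 0 := cos_neg_of_pi_div_two_lt_of_lt hφ.1 (by linarith [hφ.2])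
    have hφ_Icc : φ ∈ Set.Icc 0 (2 * π) := ⟨by linarith [hφ.1, pi_pos], by linarith [hφ.2, pi_pos]⟩
    rw [(hasDerivAt_neg_sin_sub_mul_sin_two_mul _ φ).deriv,
      show 2 * (a ^ 2 / 4) = a ^ 2 / 2 by ring, neg_cos_sub_mul_cos_two_mul_eq_zero_iff ha0, ← h2,
      or_iff_right (hcos.trans (larger_critical_cos_pos ha0)).ne,
      cos_eq_iff_eq_arccos_or_eq_two_pi_sub_arccos hφ_Icc hlam_Icc]
  · simp only [neg_sin_sub_mul_sin_two_mul_two_pi_sub]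
    linarith
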